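/- Let n ≥ 2 be an integer and define ψ_n(θ) = n(n−2)·sinⁿ(θ) + (n−1)·sin^{n−2}(θ). Then the function G : [0,1) → ℝ defined by G(d) = ∫₀^π ψ_n(θ)·(1 + d·cos θ)^{−n} dθ is strictly increasing; in particular, for every d ∈ (0,1), G'(d) = n·∫₀^{π/2} ψ_n(θ)·cos θ·( (1 − d·cos θ)^{−(n+1)} − (1 + d·cos θ)^{−(n+1)} ) dθ > 0. -/

import Mathlib

/-!
Differentiating under the integral sign (the parameter stays in a compact part of `(-1, 1)`, so
`(1 + d cos θ)^{-(n+1)}` is uniformly bounded) gives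
`G'(d) = -n ∫₀^π ψ_n(θ) cos θ (1 + d cos θ)^{-(n+1)} dθ`. As `ψ_n` depends on `θ` only through
`sin θ`, it is invariant under `θ ↦ π - θ`, which flips the sign of `cos θ`; folding `[π/2, π]` onto
`[0, π/2]` yields the stated formula for `G'`. On `(0, π/2)` we have `cos θ > 0`, hence
`1 - d cos θ < 1 + d cos θ`, and `ψ_n > 0`, so the integrand is positive.
-/

open Real MeasureTheory Set Metric

theorem hasDerivAt_one_div_one_add_mul_pow (k : ℕ) {x c : ℝ} (hx : 1 + x * c ≠ 0) :
    HasDerivAt (fun x : ℝ => 1 / (1 + x * c) ^ k) (-(k * c) / (1 + x * c) ^ (k + 1)) x := by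
  have hlin : HasDerivAt (fun x : ℝ => 1 + x * c) c x := by
    simpa using ((hasDerivAt_id x).mul_const c).const_add 1
  simp only [one_div]
  refine ((hlin.fun_pow k).fun_inv (pow_ne_zero k hx)).congr_deriv ?_
  rcases k with _ | k
  · simp
  · rw [Nat.add_sub_cancel]
    field_simp
    ring

theorem one_sub_le_one_add_mul_cos {x r : ℝ} (hx : |x| ≤ r) (θ : ℝ) : 1 - r ≤ 1 + x * cos θ := by
  have : |x * cos θ| ≤ r := by
    rw [abs_mul]; exact (mul_le_of_le_one_right (abs_nonneg x) (abs_cos_le_one θ)).trans hx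
  linarith [neg_abs_le (x * cos θ)]

theorem one_add_mul_cos_pos {x : ℝ} (hx : |x| < 1) (θ : ℝ) : 0 < 1 + x * cos θ := by
  linarith [one_sub_le_one_add_mul_cos le_rfl θ (x := x)]

theorem continuous_one_div_one_add_mul_cos_pow {x : ℝ} (hx : |x| < 1) (k : ℕ) :
    Continuous (fun θ => 1 / (1 + x * cos θ) ^ k) :=
  continuous_const.div (by fun_prop) fun θ => pow_ne_zero _ (one_add_mul_cos_pos hx θ).ne'

theorem abs_deriv_one_div_one_add_mul_cos_pow_le {x r : ℝ} (hx : |x| ≤ r) (hr : r < 1) (k : ℕ)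
    (θ : ℝ) : |-(k * cos θ) / (1 + x * cos θ) ^ (k + 1)| ≤ k / (1 - r) ^ (k + 1) := by
  have hpos : 0 < 1 - r := by linarith
  have hden := one_sub_le_one_add_mul_cos hx θ
  rw [abs_div, abs_neg, abs_mul, Nat.abs_cast, abs_pow, abs_of_pos (hpos.trans_le hden)]
  calc (k : ℝ) * |cos θ| / (1 + x * cos θ) ^ (k + 1) ≤ k * 1 / (1 - r) ^ (k + 1) := by
        gcongr; exact abs_cos_le_one θ
    _ = k / (1 - r) ^ (k + 1) := by rw [mul_one]

theorem hasDerivAt_integral_mul_one_div_one_add_mul_cos_pow {ψ : ℝ → ℝ} {a b : ℝ}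
    (hψ : IntervalIntegrable ψ volume a b) (k : ℕ) {d : ℝ} (hd : |d| < 1) :
    HasDerivAt (fun d => ∫ θ in a..b, ψ θ * (1 / (1 + d * cos θ) ^ k))
      (∫ θ in a..b, ψ θ * (-(k * cos θ) / (1 + d * cos θ) ^ (k + 1))) d := by
  set r := (1 + |d|) / 2 with hr_def
  have hr : r < 1 := by linarith
  have hε : 0 < (1 - |d|) / 2 := by linarith
  have hball : ∀ x ∈ ball d ((1 - |d|) / 2), |x| ≤ r := fun x hx => by
    rw [mem_ball, dist_eq] at hx
    linarith [abs_sub_abs_le_abs_sub x d]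
  have hψ' := (intervalIntegrable_iff.mp hψ).aestronglyMeasurable
  refine (intervalIntegral.hasDerivAt_integral_of_dominated_loc_of_deriv_le
    (F' := fun x θ => ψ θ * (-(k * cos θ) / (1 + x * cos θ) ^ (k + 1)))
    (bound := fun θ => |ψ θ| * (k / (1 - r) ^ (k + 1))) (ball_mem_nhds d hε) ?_
    (hψ.mul_continuousOn (continuous_one_div_one_add_mul_cos_pow hd k).continuousOn)
    (hψ'.mul (by fun_prop : Measurable _).aestronglyMeasurable) ?_ (hψ.norm.mul_const _) ?_).2
  · filter_upwards [ball_mem_nhds d hε] with x hx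
    exact hψ'.mul
      (continuous_one_div_one_add_mul_cos_pow ((hball x hx).trans_lt hr) k).aestronglyMeasurable
  · refine Filter.Eventually.of_forall fun θ _ x hx => ?_
    rw [Real.norm_eq_abs, abs_mul]
    exact mul_le_mul_of_nonneg_left
      (abs_deriv_one_div_one_add_mul_cos_pow_le (hball x hx) hr k θ) (abs_nonneg _)
  · refine Filter.Eventually.of_forall fun θ _ x hx => ?_
    exact (hasDerivAt_one_div_one_add_mul_pow k
      (one_add_mul_cos_pos ((hball x hx).trans_lt hr) θ).ne').const_mul (ψ θ)

theorem intervalIntegral.integral_eq_integral_add_comp_sub {E : Type*} [NormedAddCommGroup E]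
    [NormedSpace ℝ E] {f : ℝ → E} {b : ℝ} (hf : IntervalIntegrable f volume 0 b) :
    ∫ x in 0..b, f x = ∫ x in 0..b / 2, (f x + f (b - x)) := by
  have hmid : b / 2 ∈ uIcc 0 b := by
    rcases le_total 0 b with h | h
    · exact mem_uIcc_of_le (by linarith) (by linarith)
    · exact mem_uIcc_of_ge (by linarith) (by linarith)
  have h₁ := hf.mono_set (uIcc_subset_uIcc_left hmid)
  have h₂ := hf.mono_set (uIcc_subset_uIcc_right hmid)
  have h₂' : IntervalIntegrable (fun x => f (b - x)) volume 0 (b / 2) := by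
    simpa [show b - b / 2 = b / 2 by ring] using (h₂.comp_sub_left b).symm
  rw [integral_add h₁ h₂', integral_comp_sub_left, sub_zero, show b - b / 2 = b / 2 by ring,
    integral_add_adjacent_intervals h₁ h₂]

theorem integral_mul_deriv_eq_integral_half_of_symmetric {ψ : ℝ → ℝ}
    (hψ : IntervalIntegrable ψ volume 0 π) (hsymm : ∀ θ, ψ (π - θ) = ψ θ) (k : ℕ) {d : ℝ}
    (hd : |d| < 1) :
    ∫ θ in 0..π, ψ θ * (-(k * cos θ) / (1 + d * cos θ) ^ (k + 1)) =
      k * ∫ θ in 0..π / 2, ψ θ * cos θ *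
        (1 / (1 - d * cos θ) ^ (k + 1) - 1 / (1 + d * cos θ) ^ (k + 1)) := by
  have hcont : Continuous fun θ => -(k * cos θ) / (1 + d * cos θ) ^ (k + 1) :=
    (continuous_const.mul continuous_cos).neg.div (by fun_prop)
      fun θ => pow_ne_zero _ (one_add_mul_cos_pos hd θ).ne'
  rw [intervalIntegral.integral_eq_integral_add_comp_sub (hψ.mul_continuousOn hcont.continuousOn),
    ← intervalIntegral.integral_const_mul]
  congr 1 with θ
  rw [hsymm, cos_pi_sub]
  ring

theorem one_div_one_sub_pow_sub_one_div_one_add_pow_pos {x : ℝ} (hx₀ : 0 < x) (hx₁ : x < 1)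
    {m : ℕ} (hm : m ≠ 0) : 0 < 1 / (1 - x) ^ m - 1 / (1 + x) ^ m := by
  have hlt : (1 - x) ^ m < (1 + x) ^ m := pow_lt_pow_left₀ (by linarith) (by linarith) hm
  linarith [one_div_lt_one_div_of_lt (pow_pos (by linarith : 0 < 1 - x) m) hlt]

theorem integral_zero_half_pi_pos {ψ : ℝ → ℝ} (hψ : IntervalIntegrable ψ volume 0 (π / 2))
    (hpos : ∀ θ ∈ Ioo 0 (π / 2), 0 < ψ θ) (k : ℕ) {d : ℝ} (hd : d ∈ Ioo 0 1) :
    0 < ∫ θ in 0..π / 2, ψ θ * cos θ *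
        (1 / (1 - d * cos θ) ^ (k + 1) - 1 / (1 + d * cos θ) ^ (k + 1)) := by
  have hd' : |d| < 1 := abs_lt.2 ⟨by linarith [hd.1], hd.2⟩
  have hcont : Continuous fun θ => 1 / (1 - d * cos θ) ^ (k + 1) - 1 / (1 + d * cos θ) ^ (k + 1) :=
    (continuous_const.div (by fun_prop) fun θ => pow_ne_zero _
      (by linarith [one_add_mul_cos_pos (x := -d) (by rwa [abs_neg]) θ] : 0 < 1 - d * cos θ).ne').sub
      (continuous_one_div_one_add_mul_cos_pow hd' _)
  refine intervalIntegral.intervalIntegral_pos_of_pos_on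
    ((hψ.mul_continuousOn continuous_cos.continuousOn).mul_continuousOn hcont.continuousOn)
    (fun θ hθ => ?_) (by positivity)
  have hcos : 0 < cos θ := cos_pos_of_mem_Ioo ⟨by linarith [hθ.1, pi_pos], hθ.2⟩
  have hdc : d * cos θ < 1 := by nlinarith [cos_le_one θ, hd.2]
  exact mul_pos (mul_pos (hpos θ hθ) hcos)
    (one_div_one_sub_pow_sub_one_div_one_add_pow_pos (mul_pos hd.1 hcos) hdc k.succ_ne_zero)

theorem hasDerivAt_integral_zero_pi_of_symmetric {ψ : ℝ → ℝ}
    (hψ : IntervalIntegrable ψ volume 0 π) (hsymm : ∀ θ, ψ (π - θ) = ψ θ) (k : ℕ) {d : ℝ}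
    (hd : |d| < 1) :
    HasDerivAt (fun d => ∫ θ in 0..π, ψ θ * (1 / (1 + d * cos θ) ^ k))
      (k * ∫ θ in 0..π / 2, ψ θ * cos θ *
        (1 / (1 - d * cos θ) ^ (k + 1) - 1 / (1 + d * cos θ) ^ (k + 1))) d :=
  integral_mul_deriv_eq_integral_half_of_symmetric hψ hsymm k hd ▸
    hasDerivAt_integral_mul_one_div_one_add_mul_cos_pow hψ k hd

noncomputable def weight (n : ℕ) (θ : ℝ) : ℝ :=
  n * (n - 2) * sin θ ^ n + (n - 1) * sin θ ^ (n - 2)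

theorem continuous_weight (n : ℕ) : Continuous (weight n) := by
  unfold weight; fun_prop

theorem weight_pi_sub (n : ℕ) (θ : ℝ) : weight n (π - θ) = weight n θ := by
  simp only [weight, sin_pi_sub]

theorem weight_pos {n : ℕ} (hn : 2 ≤ n) {θ : ℝ} (hθ : 0 < sin θ) : 0 < weight n θ := by
  have hn' : (2 : ℝ) ≤ n := by exact_mod_cast hn
  unfold weight
  have : 0 < ((n : ℝ) - 1) * sin θ ^ (n - 2) := mul_pos (by linarith) (pow_pos hθ _)
  have : 0 ≤ (n : ℝ) * (n - 2) * sin θ ^ n := by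
    have : (0 : ℝ) ≤ n - 2 := by linarith
    positivity
  linarith

/-- For `n ≥ 2`, with `ψ_n(θ) = n(n−2)·sinⁿθ + (n−1)·sin^{n−2}θ`, the function
`G(d) = ∫₀^π ψ_n(θ)·(1 + d·cos θ)^{−n} dθ` is strictly increasing on `[0,1)`;
in particular, for every `d ∈ (0,1)`,
`G'(d) = n·∫₀^{π/2} ψ_n(θ)·cos θ·((1 − d·cos θ)^{−(n+1)} − (1 + d·cos θ)^{−(n+1)}) dθ > 0`. -/
theorem stmt_6 (n : ℕ) (hn : 2 ≤ n) :
    StrictMonoOn (fun d : ℝ => ∫ θ in (0:ℝ)..π,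
        ((n : ℝ) * ((n : ℝ) - 2) * Real.sin θ ^ n + ((n : ℝ) - 1) * Real.sin θ ^ (n - 2)) *
          (1 / (1 + d * Real.cos θ) ^ n))
      (Set.Ico (0:ℝ) 1) ∧
    ∀ d ∈ Set.Ioo (0:ℝ) 1,
      HasDerivAt (fun d : ℝ => ∫ θ in (0:ℝ)..π,
          ((n : ℝ) * ((n : ℝ) - 2) * Real.sin θ ^ n + ((n : ℝ) - 1) * Real.sin θ ^ (n - 2)) *
            (1 / (1 + d * Real.cos θ) ^ n))
        ((n : ℝ) * ∫ θ in (0:ℝ)..(π/2),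
          ((n : ℝ) * ((n : ℝ) - 2) * Real.sin θ ^ n + ((n : ℝ) - 1) * Real.sin θ ^ (n - 2)) *
            Real.cos θ *
            (1 / (1 - d * Real.cos θ) ^ (n + 1) - 1 / (1 + d * Real.cos θ) ^ (n + 1))) d ∧
      0 < (n : ℝ) * ∫ θ in (0:ℝ)..(π/2),
          ((n : ℝ) * ((n : ℝ) - 2) * Real.sin θ ^ n + ((n : ℝ) - 1) * Real.sin θ ^ (n - 2)) *
            Real.cos θ *
            (1 / (1 - d * Real.cos θ) ^ (n + 1) - 1 / (1 + d * Real.cos θ) ^ (n + 1)) := by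
  have hderiv := fun (d : ℝ) (hd : d ∈ Ico (0 : ℝ) 1) =>
    hasDerivAt_integral_zero_pi_of_symmetric ((continuous_weight n).intervalIntegrable 0 π)
      (weight_pi_sub n) n (d := d) (abs_lt.2 ⟨by linarith [hd.1], hd.2⟩)
  have hpos := fun (d : ℝ) (hd : d ∈ Ioo (0 : ℝ) 1) =>
    mul_pos (by positivity : (0 : ℝ) < n)
      (integral_zero_half_pi_pos ((continuous_weight n).intervalIntegrable 0 (π / 2))
        (fun θ hθ => weight_pos hn (sin_pos_of_pos_of_lt_pi hθ.1 (by linarith [hθ.2, pi_pos])))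
        n hd)
  refine ⟨strictMonoOn_of_deriv_pos (convex_Ico 0 1)
    (fun d hd => (hderiv d hd).continuousAt.continuousWithinAt) fun d hd => ?_,
    fun d hd => ⟨hderiv d (Ioo_subset_Ico_self hd), hpos d hd⟩⟩
  rw [interior_Ico] at hd
  exact (hderiv d (Ioo_subset_Ico_self hd)).deriv ▸ hpos d hd
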